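/- Under the PRP mediator and action-targeted utility, along a finite improvement path γ, if at step r author p deviates to topic k and Q_{p,k} ≤ B_k(a^r), then her utility after the deviation is at most D(k)·S_k(γ)/(W_k(γ)+1), where S_k(γ) is the maximum of B_k over profiles in γ and W_k(γ) the minimum of H_k over profiles in γ. -/

import Mathlib

open Finset

noncomputable section

/-- Highest quality of a document on topic `k` under profile `a`:
`B_k(a) = max_j Q_{j,k} · 1[a_j = k]` (with value `0` when the max is over an empty set). -/
def hiQ {n m : ℕ} (Q : Fin n → Fin m → ℝ) (k : Fin m) (a : Fin n → Fin m) : ℝ :=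
  Finset.univ.fold max 0 (fun j => if a j = k then Q j k else 0)

/-- Number of authors writing on topic `k` with the highest quality `B_k(a)`. -/
def numTop {n m : ℕ} (Q : Fin n → Fin m → ℝ) (k : Fin m) (a : Fin n → Fin m) : ℕ :=
  (Finset.univ.filter (fun j => a j = k ∧ Q j k = hiQ Q k a)).card

/-- The PRP mediator: first-rank probability of author `j` on topic `k` under profile `a`. -/
def prp {n m : ℕ} (Q : Fin n → Fin m → ℝ) (k : Fin m) (a : Fin n → Fin m) (j : Fin n) : ℝ :=
  if a j = k ∧ Q j k = hiQ Q k a then 1 / (numTop Q k a : ℝ) else 0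

/-- Exposure-targeted utility under the PRP mediator. -/
def uEx {n m : ℕ} (D : Fin m → ℝ) (Q : Fin n → Fin m → ℝ) (a : Fin n → Fin m) (j : Fin n) : ℝ :=
  D (a j) * prp Q (a j) a j

/-- Action-targeted utility under the PRP mediator. -/
def uAc {n m : ℕ} (D : Fin m → ℝ) (Q : Fin n → Fin m → ℝ) (a : Fin n → Fin m) (j : Fin n) : ℝ :=
  D (a j) * prp Q (a j) a j * Q j (a j)

/-- `b` is obtained from `a` by a unilateral deviation of author `p` strictly
increasing her utility (an improvement step). -/
def ImpStep {n m : ℕ} (u : (Fin n → Fin m) → Fin n → ℝ)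
    (a b : Fin n → Fin m) (p : Fin n) : Prop :=
  (∀ i, i ≠ p → b i = a i) ∧ b p ≠ a p ∧ u a p < u b p

/-- `γ` is an improvement path: each consecutive pair of profiles is an improvement step. -/
def IsImpPath {n m l : ℕ} (u : (Fin n → Fin m) → Fin n → ℝ)
    (γ : Fin (l + 1) → Fin n → Fin m) : Prop :=
  ∀ r : Fin l, ∃ p, ImpStep u (γ r.castSucc) (γ r.succ) p

/-- `W_k(γ)`: the minimum of `H_k` over all profiles in the finite path `γ`. -/
def minTop {n m l : ℕ} (Q : Fin n → Fin m → ℝ) (k : Fin m)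
    (γ : Fin (l + 1) → Fin n → Fin m) : ℕ :=
  Finset.univ.inf' Finset.univ_nonempty (fun r => numTop Q k (γ r))

/-- `S_k(γ)`: the maximum of `B_k` over all profiles in the finite path `γ`. -/
def maxQ {n m l : ℕ} (Q : Fin n → Fin m → ℝ) (k : Fin m)
    (γ : Fin (l + 1) → Fin n → Fin m) : ℝ :=
  Finset.univ.sup' Finset.univ_nonempty (fun r => hiQ Q k (γ r))

/-!
A deviation of `p` from profile `a` to topic `k` (giving `b`) with `Q_{p,k} ≤ B_k(a)` leaves
`B_k` unchanged. If `p` is then a top author on `k`, she joins all the top authors of `a`, so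
`H_k` grows by at least one and her utility is
`D(k) · B_k(a) / H_k(b) ≤ D(k) · B_k(a) / (H_k(a) + 1)`; otherwise it is `0`.
Bounding `B_k(a) ≤ S_k(γ)` and `H_k(a) ≥ W_k(γ)` gives the claim.
-/

section Profile

variable {n m : ℕ} (Q : Fin n → Fin m → ℝ) (k : Fin m)

theorem hiQ_le_iff (a : Fin n → Fin m) {c : ℝ} :
    hiQ Q k a ≤ c ↔ 0 ≤ c ∧ ∀ j, a j = k → Q j k ≤ c := by
  unfold hiQ
  rw [fold_max_le]
  refine and_congr_right fun hc => ⟨fun h j hj => ?_, fun h j _ => ?_⟩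
  · simpa [hj] using h j (mem_univ j)
  · split_ifs with hj
    exacts [h j hj, hc]

theorem hiQ_nonneg (a : Fin n → Fin m) : 0 ≤ hiQ Q k a :=
  ((hiQ_le_iff Q k a).1 le_rfl).1

theorem le_hiQ {a : Fin n → Fin m} {j : Fin n} (hj : a j = k) : Q j k ≤ hiQ Q k a :=
  ((hiQ_le_iff Q k a).1 le_rfl).2 j hj

variable {Q k} {a b : Fin n → Fin m} {p : Fin n}

theorem hiQ_eq_of_deviation (hoth : ∀ i, i ≠ p → b i = a i) (hbp : b p = k)
    (hq : Q p k ≤ hiQ Q k a) : hiQ Q k b = hiQ Q k a := by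
  apply le_antisymm
  · refine (hiQ_le_iff Q k b).2 ⟨hiQ_nonneg Q k a, fun j hj => ?_⟩
    by_cases hjp : j = p
    · exact hjp ▸ hq
    · exact le_hiQ Q k ((hoth j hjp).symm.trans hj)
  · refine (hiQ_le_iff Q k a).2 ⟨hiQ_nonneg Q k b, fun j hj => ?_⟩
    by_cases hjp : j = p
    · exact le_hiQ Q k (hjp ▸ hbp)
    · exact le_hiQ Q k ((hoth j hjp).trans hj)

theorem numTop_lt_of_deviation (hoth : ∀ i, i ≠ p → b i = a i) (hbp : b p = k)
    (hap : a p ≠ k) (hq : Q p k ≤ hiQ Q k a) (htop : Q p k = hiQ Q k b) :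
    numTop Q k a < numTop Q k b := by
  have hB := hiQ_eq_of_deviation hoth hbp hq
  have hsub : insert p (univ.filter fun j => a j = k ∧ Q j k = hiQ Q k a)
      ⊆ univ.filter fun j => b j = k ∧ Q j k = hiQ Q k b := by
    intro j hj
    rcases mem_insert.mp hj with rfl | hj
    · simp [hbp, htop]
    · obtain ⟨hjk, hjq⟩ := (mem_filter.mp hj).2
      have hjp : j ≠ p := by rintro rfl; exact hap hjk
      simp [hoth j hjp, hjk, hjq, hB]
  have hp : p ∉ univ.filter fun j => a j = k ∧ Q j k = hiQ Q k a := by simp [hap]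
  simpa [card_insert_of_notMem hp, numTop] using card_le_card hsub

theorem uAc_deviation_le {D : Fin m → ℝ} (hD : 0 ≤ D k) (hoth : ∀ i, i ≠ p → b i = a i)
    (hbp : b p = k) (hap : a p ≠ k) (hq : Q p k ≤ hiQ Q k a) :
    uAc D Q b p ≤ D k * hiQ Q k a / (numTop Q k a + 1) := by
  have hrhs : 0 ≤ D k * hiQ Q k a := mul_nonneg hD (hiQ_nonneg Q k a)
  unfold uAc prp
  rw [hbp]
  split_ifs with htop
  · have hH : (numTop Q k a : ℝ) + 1 ≤ numTop Q k b := by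
      exact_mod_cast numTop_lt_of_deviation hoth hbp hap hq htop.2
    calc D k * (1 / (numTop Q k b : ℝ)) * Q p k = D k * hiQ Q k a / numTop Q k b := by
          rw [htop.2, hiQ_eq_of_deviation hoth hbp hq]; ring
      _ ≤ D k * hiQ Q k a / (numTop Q k a + 1) :=
          div_le_div_of_nonneg_left hrhs (by positivity) hH
  · rw [mul_zero, zero_mul]
    positivity

end Profile

section Path

variable {n m l : ℕ} (Q : Fin n → Fin m → ℝ) (k : Fin m) (γ : Fin (l + 1) → Fin n → Fin m)

theorem hiQ_le_maxQ (s : Fin (l + 1)) : hiQ Q k (γ s) ≤ maxQ Q k γ :=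
  le_sup' (fun s => hiQ Q k (γ s)) (mem_univ s)

theorem minTop_le_numTop (s : Fin (l + 1)) : minTop Q k γ ≤ numTop Q k (γ s) :=
  inf'_le (fun s => numTop Q k (γ s)) (mem_univ s)

end Path

theorem stmt5_general {n m l : ℕ} (D : Fin m → ℝ) (Q : Fin n → Fin m → ℝ)
    (hD : ∀ k, 0 ≤ D k)
    (γ : Fin (l + 1) → Fin n → Fin m)
    (r : Fin l) (p : Fin n) (k : Fin m)
    (hstep : ImpStep (uAc D Q) (γ r.castSucc) (γ r.succ) p)
    (hk : γ r.succ p = k) (hq : Q p k ≤ hiQ Q k (γ r.castSucc)) :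
    uAc D Q (γ r.succ) p ≤ D k * maxQ Q k γ / (minTop Q k γ + 1) := by
  obtain ⟨hoth, hne, -⟩ := hstep
  have hap : γ r.castSucc p ≠ k := fun h => hne (hk.trans h.symm)
  have hS := hiQ_le_maxQ Q k γ r.castSucc
  have hW : (minTop Q k γ : ℝ) ≤ numTop Q k (γ r.castSucc) := by
    exact_mod_cast minTop_le_numTop Q k γ r.castSucc
  calc uAc D Q (γ r.succ) p
      ≤ D k * hiQ Q k (γ r.castSucc) / (numTop Q k (γ r.castSucc) + 1) :=
        uAc_deviation_le (hD k) hoth hk hap hq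
    _ ≤ D k * maxQ Q k γ / (minTop Q k γ + 1) :=
        div_le_div₀ (mul_nonneg (hD k) ((hiQ_nonneg Q k _).trans hS))
          (mul_le_mul_of_nonneg_left hS (hD k)) (by positivity) (by linarith)

/-- Along a finite improvement path `γ` under PRP/action-targeted utility, if at step
`r` author `p` deviates to topic `k` and `Q_{p,k} ≤ B_k(a^r)`, then her utility after
the deviation is at most `D(k)·S_k(γ)/(W_k(γ)+1)`. -/
theorem stmt5 {n m l : ℕ} (D : Fin m → ℝ) (Q : Fin n → Fin m → ℝ)
    (hD : ∀ k, 0 ≤ D k) (hDsum : ∑ k, D k = 1)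
    (hQ : ∀ j k, Q j k ∈ Set.Icc (0:ℝ) 1)
    (γ : Fin (l + 1) → Fin n → Fin m) (hγ : IsImpPath (uAc D Q) γ)
    (r : Fin l) (p : Fin n) (k : Fin m)
    (hstep : ImpStep (uAc D Q) (γ r.castSucc) (γ r.succ) p)
    (hk : γ r.succ p = k) (hq : Q p k ≤ hiQ Q k (γ r.castSucc)) :
    uAc D Q (γ r.succ) p ≤ D k * maxQ Q k γ / (minTop Q k γ + 1) :=
  stmt5_general D Q hD γ r p k hstep hk hq
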